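/- Let A be a commutative integral domain, M a nonzero ideal of A, and Â = [[A, M],[M, A]] the subring of M₂(A) consisting of matrices whose off-diagonal entries lie in M. Then: (1) the two-sided ideals of Â are exactly the sets [[I₁₁, I₁₂],[I₂₁, I₂₂]] where each I_{ij} is an ideal of A (not necessarily proper), I₁₂, I₂₁ ⊆ M, and M·I_{ij} ⊆ I_{i′j} ∩ I_{ij′} for all i,j (where 1′ = 2 and 2′ = 1); (2) the semiprime two-sided ideals of Â are exactly those of the form [[I, M∩I],[M∩I′, I′]] where I and I′ are semiprime ideals of A satisfying M ∩ I = M ∩ I′. -/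

import Mathlib

/-- A two-sided ideal `P` of a ring `R` is semiprime if `aRa ⊆ P` implies `a ∈ P`. -/
def IsSemiprimeTSI {R : Type*} [Ring R] (P : TwoSidedIdeal R) : Prop :=
  ∀ a : R, (∀ r : R, a * r * a ∈ P) → a ∈ P

/-- An ideal of a commutative ring is semiprime if `a² ∈ I` implies `a ∈ I`. -/
def IsSemiprimeIdeal {A : Type*} [CommRing A] (I : Ideal A) : Prop :=
  ∀ a : A, a ^ 2 ∈ I → a ∈ I

/-- The other index: `0 ↦ 1`, `1 ↦ 0`. -/
def other (i : Fin 2) : Fin 2 := 1 - i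

/-- The ring `Â = [[A, M],[M, A]]` of matrices over `A` with off-diagonal entries in `M`. -/
def hatA (A : Type*) [CommRing A] (M : Ideal A) : Subring (Matrix (Fin 2) (Fin 2) A) where
  carrier := {X | X 0 1 ∈ M ∧ X 1 0 ∈ M}
  zero_mem' := by simp
  one_mem' := by simp [Matrix.one_apply]
  add_mem' := fun hX hY => ⟨M.add_mem hX.1 hY.1, M.add_mem hX.2 hY.2⟩
  neg_mem' := fun hX => ⟨M.neg_mem hX.1, M.neg_mem hX.2⟩
  mul_mem' := by
    rintro X Y ⟨hX1, hX2⟩ ⟨hY1, hY2⟩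
    constructor
    · show (X * Y) 0 1 ∈ M
      rw [Matrix.mul_apply, Fin.sum_univ_two]
      exact M.add_mem (M.mul_mem_left _ hY1) (M.mul_mem_right _ hX1)
    · show (X * Y) 1 0 ∈ M
      rw [Matrix.mul_apply, Fin.sum_univ_two]
      exact M.add_mem (M.mul_mem_right _ hX2) (M.mul_mem_left _ hY2)

namespace StmtAux

variable {A : Type*} [CommRing A] {M : Ideal A}

@[simp] lemma other_zero : other 0 = 1 := rfl
@[simp] lemma other_one : other 1 = 0 := rfl

lemma mem_hatA_iff {X : Matrix (Fin 2) (Fin 2) A} : X ∈ hatA A M ↔ X 0 1 ∈ M ∧ X 1 0 ∈ M := Iff.rfl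

lemma sb_mem (i j : Fin 2) (a : A) (h : i ≠ j → a ∈ M) :
    Matrix.single i j a ∈ hatA A M := by
  rw [mem_hatA_iff]
  fin_cases i <;> fin_cases j <;>
    simp_all <;>
    first
      | exact M.zero_mem
      | exact h (by decide)
      | exact ⟨h (by decide), M.zero_mem⟩
      | exact ⟨M.zero_mem, h (by decide)⟩
      | exact ⟨M.zero_mem, M.zero_mem⟩

lemma sb_mul_mul_sb (i j k l : Fin 2) (a b : A) (Y : Matrix (Fin 2) (Fin 2) A) :
    Matrix.single i j a * Y * Matrix.single k l b
      = Matrix.single i l (a * Y j k * b) := by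
  ext p q
  by_cases hp : p = i <;> by_cases hq : q = l <;> simp [hp, hq] <;>
    exact (Matrix.single_apply_of_ne _ _ _ _ _ (by rintro ⟨h1, h2⟩ <;> simp_all)).symm

lemma mid_apply (Y Z : Matrix (Fin 2) (Fin 2) A) (k l i j : Fin 2) (b : A) :
    (Y * Matrix.single k l b * Z) i j = Y i k * b * Z l j := by
  rw [Matrix.mul_apply, Fin.sum_univ_two]
  fin_cases l <;> simp

lemma matrix_decomp (X : Matrix (Fin 2) (Fin 2) A) :
    X = Matrix.single 0 0 (X 0 0) + Matrix.single 0 1 (X 0 1)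
      + Matrix.single 1 0 (X 1 0) + Matrix.single 1 1 (X 1 1) := by
  ext p q
  fin_cases p <;> fin_cases q <;> simp

def el (i j : Fin 2) (a : A) (h : i ≠ j → a ∈ M) : hatA A M :=
  ⟨Matrix.single i j a, sb_mem i j a h⟩

@[simp] lemma el_coe (i j : Fin 2) (a : A) (h : i ≠ j → a ∈ M) :
    (el i j a h : Matrix (Fin 2) (Fin 2) A) = Matrix.single i j a := rfl

lemma off_diag_mem (Y : hatA A M) {i k : Fin 2} (h : i ≠ k) :
    (Y : Matrix (Fin 2) (Fin 2) A) i k ∈ M := by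
  fin_cases i <;> fin_cases k <;> first
    | exact absurd rfl h
    | exact Y.2.1
    | exact Y.2.2

lemma other_of_ne {i k : Fin 2} (h : i ≠ k) : other k = i := by
  revert h; fin_cases i <;> fin_cases k <;> decide

def idealOf (Ihat : TwoSidedIdeal (hatA A M)) (i j : Fin 2) : Ideal A where
  carrier := {a | ∃ h : (i ≠ j → a ∈ M), el i j a h ∈ Ihat}
  zero_mem' := ⟨fun _ => M.zero_mem, by
    convert Ihat.zero_mem
    exact Subtype.ext (by simp)⟩
  add_mem' := by
    rintro a b ⟨ha, hael⟩ ⟨hb, hbel⟩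
    refine ⟨fun h => M.add_mem (ha h) (hb h), ?_⟩
    convert Ihat.add_mem hael hbel using 1
    exact Subtype.ext (by simp [Matrix.single_add])
  smul_mem' := by
    rintro c a ⟨ha, hael⟩
    refine ⟨fun h => by simpa using M.mul_mem_left c (ha h), ?_⟩
    convert Ihat.mul_mem_left (el i i c (fun h => absurd rfl h)) _ hael using 1
    refine Subtype.ext ?_
    push_cast
    simp

lemma mem_idealOf {Ihat : TwoSidedIdeal (hatA A M)} {i j : Fin 2} {a : A} :
    a ∈ idealOf Ihat i j ↔ ∃ h : (i ≠ j → a ∈ M), el i j a h ∈ Ihat := Iff.rfl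

lemma entry_mem_idealOf {Ihat : TwoSidedIdeal (hatA A M)} {X : hatA A M} (hX : X ∈ Ihat)
    (i j : Fin 2) : (X : Matrix (Fin 2) (Fin 2) A) i j ∈ idealOf Ihat i j := by
  refine ⟨fun h => off_diag_mem X h, ?_⟩
  have h2 := Ihat.mul_mem_right _ (el j j 1 (fun h => absurd rfl h))
    (Ihat.mul_mem_left (el i i 1 (fun h => absurd rfl h)) X hX)
  convert h2 using 1
  refine Subtype.ext ?_
  push_cast
  simp [sb_mul_mul_sb]

lemma mem_of_entries {Ihat : TwoSidedIdeal (hatA A M)} {X : hatA A M}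
    (h : ∀ i j, (X : Matrix (Fin 2) (Fin 2) A) i j ∈ idealOf Ihat i j) : X ∈ Ihat := by
  obtain ⟨h00, e00⟩ := h 0 0
  obtain ⟨h01, e01⟩ := h 0 1
  obtain ⟨h10, e10⟩ := h 1 0
  obtain ⟨h11, e11⟩ := h 1 1
  have : X = el 0 0 _ h00 + el 0 1 _ h01 + el 1 0 _ h10 + el 1 1 _ h11 := by
    refine Subtype.ext ?_
    push_cast
    exact matrix_decomp _
  rw [this]
  exact Ihat.add_mem (Ihat.add_mem (Ihat.add_mem e00 e01) e10) e11

lemma mem_iff_entries {Ihat : TwoSidedIdeal (hatA A M)} {X : hatA A M} :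
    X ∈ Ihat ↔ ∀ i j, (X : Matrix (Fin 2) (Fin 2) A) i j ∈ idealOf Ihat i j :=
  ⟨fun h i j => entry_mem_idealOf h i j, mem_of_entries⟩

lemma idealOf_mix (Ihat : TwoSidedIdeal (hatA A M)) (i j : Fin 2) {m : A} (hm : m ∈ M)
    {a : A} (ha : a ∈ idealOf Ihat i j) :
    m * a ∈ idealOf Ihat (other i) j ∧ m * a ∈ idealOf Ihat i (other j) := by
  obtain ⟨h, hel⟩ := ha
  constructor
  · refine ⟨fun _ => M.mul_mem_right a hm, ?_⟩
    convert Ihat.mul_mem_left (el (other i) i m (fun _ => hm)) _ hel using 1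
    refine Subtype.ext ?_
    push_cast
    simp
  · refine ⟨fun _ => M.mul_mem_right a hm, ?_⟩
    convert Ihat.mul_mem_right _ (el j (other j) m (fun _ => hm)) hel using 1
    refine Subtype.ext ?_
    push_cast
    simp [mul_comm]

lemma left_term {I : Fin 2 → Fin 2 → Ideal A}
    (hmix : ∀ i j : Fin 2, ∀ m ∈ M, ∀ a ∈ I i j,
      m * a ∈ I (other i) j ∧ m * a ∈ I i (other j))
    (Y : hatA A M) (i k j : Fin 2) {x : A} (hx : x ∈ I k j) :
    (Y : Matrix (Fin 2) (Fin 2) A) i k * x ∈ I i j := by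
  by_cases h : i = k
  · subst h; exact (I i j).mul_mem_left _ hx
  · have h2 := (hmix k j _ (off_diag_mem Y h) x hx).1
    rwa [other_of_ne h] at h2

lemma right_term {I : Fin 2 → Fin 2 → Ideal A}
    (hmix : ∀ i j : Fin 2, ∀ m ∈ M, ∀ a ∈ I i j,
      m * a ∈ I (other i) j ∧ m * a ∈ I i (other j))
    (Y : hatA A M) (i k j : Fin 2) {x : A} (hx : x ∈ I i k) :
    x * (Y : Matrix (Fin 2) (Fin 2) A) k j ∈ I i j := by
  by_cases h : j = k
  · subst h; exact (I i j).mul_mem_right _ hx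
  · have h2 := (hmix i k _ (off_diag_mem Y (Ne.symm h)) x hx).2
    rw [other_of_ne h] at h2
    rwa [mul_comm]

def idealFam (I : Fin 2 → Fin 2 → Ideal A)
    (hmix : ∀ i j : Fin 2, ∀ m ∈ M, ∀ a ∈ I i j,
      m * a ∈ I (other i) j ∧ m * a ∈ I i (other j)) :
    TwoSidedIdeal (hatA A M) :=
  TwoSidedIdeal.mk' {X : hatA A M | ∀ i j : Fin 2, (X : Matrix (Fin 2) (Fin 2) A) i j ∈ I i j}
    (fun i j => by simp)
    (fun {X Y} hX hY i j => by
      have : ((X + Y : hatA A M) : Matrix (Fin 2) (Fin 2) A) i j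
          = (X : Matrix (Fin 2) (Fin 2) A) i j + (Y : Matrix (Fin 2) (Fin 2) A) i j := rfl
      rw [this]; exact (I i j).add_mem (hX i j) (hY i j))
    (fun {X} hX i j => by
      have : ((-X : hatA A M) : Matrix (Fin 2) (Fin 2) A) i j
          = -((X : Matrix (Fin 2) (Fin 2) A) i j) := rfl
      rw [this]; exact (I i j).neg_mem (hX i j))
    (fun {Y X} hX i j => by
      have : ((Y * X : hatA A M) : Matrix (Fin 2) (Fin 2) A) i j
          = (Y : Matrix (Fin 2) (Fin 2) A) i 0 * (X : Matrix (Fin 2) (Fin 2) A) 0 j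
            + (Y : Matrix (Fin 2) (Fin 2) A) i 1 * (X : Matrix (Fin 2) (Fin 2) A) 1 j := by
        show ((Y : Matrix (Fin 2) (Fin 2) A) * X) i j = _
        rw [Matrix.mul_apply, Fin.sum_univ_two]
      rw [this]
      exact (I i j).add_mem (left_term hmix Y i 0 j (hX 0 j)) (left_term hmix Y i 1 j (hX 1 j)))
    (fun {X Y} hX i j => by
      have : ((X * Y : hatA A M) : Matrix (Fin 2) (Fin 2) A) i j
          = (X : Matrix (Fin 2) (Fin 2) A) i 0 * (Y : Matrix (Fin 2) (Fin 2) A) 0 j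
            + (X : Matrix (Fin 2) (Fin 2) A) i 1 * (Y : Matrix (Fin 2) (Fin 2) A) 1 j := by
        show ((X : Matrix (Fin 2) (Fin 2) A) * Y) i j = _
        rw [Matrix.mul_apply, Fin.sum_univ_two]
      rw [this]
      exact (I i j).add_mem (right_term hmix Y i 0 j (hX i 0)) (right_term hmix Y i 1 j (hX i 1)))

lemma mem_idealFam {I : Fin 2 → Fin 2 → Ideal A} {hmix} {X : hatA A M} :
    X ∈ idealFam I hmix ↔ ∀ i j : Fin 2, (X : Matrix (Fin 2) (Fin 2) A) i j ∈ I i j :=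
  TwoSidedIdeal.mem_mk' _ _ _ _ _ _ _

theorem part1 (T : Set ↥(hatA A M)) :
      (∃ Ihat : TwoSidedIdeal (hatA A M), (Ihat : Set ↥(hatA A M)) = T) ↔
      (∃ I : Fin 2 → Fin 2 → Ideal A,
        (∀ i j : Fin 2, i ≠ j → I i j ≤ M) ∧
        (∀ i j : Fin 2, ∀ m ∈ M, ∀ a ∈ I i j,
          m * a ∈ I (other i) j ∧ m * a ∈ I i (other j)) ∧
        T = {X : ↥(hatA A M) | ∀ i j : Fin 2, (X : Matrix (Fin 2) (Fin 2) A) i j ∈ I i j}) := by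
  constructor
  · rintro ⟨Ihat, rfl⟩
    refine ⟨idealOf Ihat, ?_, fun i j m hm a ha => idealOf_mix Ihat i j hm ha, ?_⟩
    · rintro i j hij a ⟨h, -⟩
      exact h hij
    · ext X
      simpa [SetLike.mem_coe] using (mem_iff_entries (Ihat := Ihat) (X := X))
  · rintro ⟨I, hle, hmix, rfl⟩
    exact ⟨idealFam I hmix, by ext X; simpa using (mem_idealFam (X := X))⟩

lemma cube_mem {I : Ideal A} (hI : IsSemiprimeIdeal I) (x : A) (hx : x * x * x ∈ I) : x ∈ I :=
  hI x (hI (x ^ 2) (by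
    rw [show ((x ^ 2) ^ 2 : A) = (x * x * x) * x by ring]
    exact I.mul_mem_right x hx))

lemma idealOf_diag_semiprime (Ihat : TwoSidedIdeal (hatA A M)) (hsp : IsSemiprimeTSI Ihat)
    (i : Fin 2) : IsSemiprimeIdeal (idealOf Ihat i i) := by
  intro a ha
  refine ⟨fun h => absurd rfl h, hsp (el i i a (fun h => absurd rfl h)) ?_⟩
  intro Y
  have hmem : a ^ 2 * (Y : Matrix (Fin 2) (Fin 2) A) i i ∈ idealOf Ihat i i :=
    (idealOf Ihat i i).mul_mem_right _ ha
  obtain ⟨h3, hel3⟩ := hmem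
  have heq : el i i a (fun h => absurd rfl h) * Y * el i i a (fun h => absurd rfl h)
      = el i i (a ^ 2 * (Y : Matrix (Fin 2) (Fin 2) A) i i) h3 := by
    refine Subtype.ext ?_
    push_cast
    simp only [el_coe, sb_mul_mul_sb]
    congr 1
    ring
  rw [heq]
  exact hel3

lemma sq_mem_of_offdiag {Ihat : TwoSidedIdeal (hatA A M)} {i j : Fin 2} {x : A}
    (hx : x ∈ idealOf Ihat i j) (hxM : x ∈ M) :
    x * x ∈ idealOf Ihat i i ∧ x * x ∈ idealOf Ihat j j := by
  obtain ⟨h, hel⟩ := hx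
  constructor
  · refine ⟨fun h => absurd rfl h, ?_⟩
    convert Ihat.mul_mem_right _ (el j i x (fun _ => hxM)) hel using 1
    exact Subtype.ext (by push_cast; simp)
  · refine ⟨fun h => absurd rfl h, ?_⟩
    convert Ihat.mul_mem_left (el j i x (fun _ => hxM)) _ hel using 1
    exact Subtype.ext (by push_cast; simp)

lemma inf_le_offdiag {Ihat : TwoSidedIdeal (hatA A M)} (hsp : IsSemiprimeTSI Ihat)
    {i j : Fin 2} (hij : i ≠ j) {x : A} (hxM : x ∈ M) (hxI : x ∈ idealOf Ihat i i) :
    x ∈ idealOf Ihat i j := by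
  refine ⟨fun _ => hxM, hsp (el i j x (fun _ => hxM)) ?_⟩
  intro Y
  have hm : x * (Y : Matrix (Fin 2) (Fin 2) A) j i ∈ M := M.mul_mem_right _ hxM
  have h2 := (idealOf_mix Ihat i i hm hxI).2
  rw [other_of_ne hij.symm] at h2
  obtain ⟨h3, hel3⟩ := h2
  have heq : el i j x (fun _ => hxM) * Y * el i j x (fun _ => hxM)
      = el i j (x * (Y : Matrix (Fin 2) (Fin 2) A) j i * x) h3 := by
    refine Subtype.ext ?_
    push_cast
    simp [sb_mul_mul_sb]
  rw [heq]
  exact hel3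

lemma part2_forward {Ihat : TwoSidedIdeal (hatA A M)} (hsp : IsSemiprimeTSI Ihat) :
      (∃ I I' : Ideal A, IsSemiprimeIdeal I ∧ IsSemiprimeIdeal I' ∧ M ⊓ I = M ⊓ I' ∧
        (Ihat : Set ↥(hatA A M)) = {X : ↥(hatA A M) |
          (X : Matrix (Fin 2) (Fin 2) A) 0 0 ∈ I ∧
          (X : Matrix (Fin 2) (Fin 2) A) 0 1 ∈ M ⊓ I ∧
          (X : Matrix (Fin 2) (Fin 2) A) 1 0 ∈ M ⊓ I' ∧
          (X : Matrix (Fin 2) (Fin 2) A) 1 1 ∈ I'}) := by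
  set I := idealOf Ihat 0 0 with hI
  set I' := idealOf Ihat 1 1 with hI'
  set J := idealOf Ihat 0 1 with hJ
  set J' := idealOf Ihat 1 0 with hJ'
  have hIsp : IsSemiprimeIdeal I := idealOf_diag_semiprime Ihat hsp 0
  have hI'sp : IsSemiprimeIdeal I' := idealOf_diag_semiprime Ihat hsp 1
  -- J ≤ M ⊓ I ⊓ I'
  have hJle : ∀ x ∈ J, x ∈ M ∧ x ∈ I ∧ x ∈ I' := by
    intro x hx
    have hxM : x ∈ M := hx.choose (by decide)
    have hsq := sq_mem_of_offdiag hx hxM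
    exact ⟨hxM, hIsp x (by rw [pow_two]; exact hsq.1), hI'sp x (by rw [pow_two]; exact hsq.2)⟩
  have hJ'le : ∀ x ∈ J', x ∈ M ∧ x ∈ I ∧ x ∈ I' := by
    intro x hx
    have hxM : x ∈ M := hx.choose (by decide)
    have hsq := sq_mem_of_offdiag hx hxM
    exact ⟨hxM, hIsp x (by rw [pow_two]; exact hsq.2), hI'sp x (by rw [pow_two]; exact hsq.1)⟩
  have hMIJ : ∀ x ∈ M ⊓ I, x ∈ J := fun x hx =>
    inf_le_offdiag hsp (by decide) hx.1 hx.2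
  have hMI'J' : ∀ x ∈ M ⊓ I', x ∈ J' := fun x hx =>
    inf_le_offdiag hsp (by decide) hx.1 hx.2
  have hMM : M ⊓ I = M ⊓ I' := by
    apply le_antisymm
    · intro x hx
      have := hJle x (hMIJ x hx)
      exact ⟨this.1, this.2.2⟩
    · intro x hx
      have := hJ'le x (hMI'J' x hx)
      exact ⟨this.1, this.2.1⟩
  have hJeq : J = M ⊓ I := by
    apply le_antisymm
    · intro x hx
      exact ⟨(hJle x hx).1, (hJle x hx).2.1⟩
    · exact hMIJ
  have hJ'eq : J' = M ⊓ I' := by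
    apply le_antisymm
    · intro x hx
      exact ⟨(hJ'le x hx).1, (hJ'le x hx).2.2⟩
    · exact hMI'J'
  refine ⟨I, I', hIsp, hI'sp, hMM, ?_⟩
  ext X
  simp only [SetLike.mem_coe, Set.mem_setOf_eq]
  rw [mem_iff_entries]
  constructor
  · intro h
    exact ⟨h 0 0, hJeq ▸ h 0 1, hJ'eq ▸ h 1 0, h 1 1⟩
  · rintro ⟨h00, h01, h10, h11⟩ i j
    fin_cases i <;> fin_cases j
    · exact h00
    · show (X : Matrix (Fin 2) (Fin 2) A) 0 1 ∈ J
      rw [hJeq]; exact h01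
    · show (X : Matrix (Fin 2) (Fin 2) A) 1 0 ∈ J'
      rw [hJ'eq]; exact h10
    · exact h11

lemma part2_backward {I I' : Ideal A} (hIsp : IsSemiprimeIdeal I) (hI'sp : IsSemiprimeIdeal I')
    (hMM : M ⊓ I = M ⊓ I') :
    ∃ Ihat : TwoSidedIdeal (hatA A M),
      (Ihat : Set ↥(hatA A M)) = {X : ↥(hatA A M) |
          (X : Matrix (Fin 2) (Fin 2) A) 0 0 ∈ I ∧
          (X : Matrix (Fin 2) (Fin 2) A) 0 1 ∈ M ⊓ I ∧
          (X : Matrix (Fin 2) (Fin 2) A) 1 0 ∈ M ⊓ I' ∧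
          (X : Matrix (Fin 2) (Fin 2) A) 1 1 ∈ I'} ∧ IsSemiprimeTSI Ihat := by
  set F : Fin 2 → Fin 2 → Ideal A := ![![I, M ⊓ I], ![M ⊓ I', I']] with hF
  have hF00 : F 0 0 = I := rfl
  have hF01 : F 0 1 = M ⊓ I := rfl
  have hF10 : F 1 0 = M ⊓ I' := rfl
  have hF11 : F 1 1 = I' := rfl
  have key1 : ∀ m ∈ M, ∀ a ∈ I, m * a ∈ M ⊓ I' := fun m hm a ha =>
    hMM ▸ (⟨M.mul_mem_right a hm, I.mul_mem_left m ha⟩ : m * a ∈ M ⊓ I)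
  have key1' : ∀ m ∈ M, ∀ a ∈ I, m * a ∈ M ⊓ I := fun m hm a ha =>
    ⟨M.mul_mem_right a hm, I.mul_mem_left m ha⟩
  have key2 : ∀ m ∈ M, ∀ a ∈ I', m * a ∈ M ⊓ I := fun m hm a ha =>
    hMM.symm ▸ (⟨M.mul_mem_right a hm, I'.mul_mem_left m ha⟩ : m * a ∈ M ⊓ I')
  have key2' : ∀ m ∈ M, ∀ a ∈ I', m * a ∈ M ⊓ I' := fun m hm a ha =>
    ⟨M.mul_mem_right a hm, I'.mul_mem_left m ha⟩
  have hmix : ∀ i j : Fin 2, ∀ m ∈ M, ∀ a ∈ F i j,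
      m * a ∈ F (other i) j ∧ m * a ∈ F i (other j) := by
    intro i j m hm a ha
    fin_cases i <;> fin_cases j <;>
      simp only [other_zero, other_one, hF00, hF01, hF10, hF11] at ha ⊢
    · exact ⟨key1 m hm a ha, key1' m hm a ha⟩
    · exact ⟨(key1 m hm a ha.2).2, I.mul_mem_left m ha.2⟩
    · exact ⟨(key2 m hm a ha.2).2, I'.mul_mem_left m ha.2⟩
    · exact ⟨key2 m hm a ha, key2' m hm a ha⟩
  refine ⟨idealFam F hmix, ?_, ?_⟩
  · ext X
    rw [show ((idealFam F hmix : Set ↥(hatA A M)) = {X : ↥(hatA A M) | ∀ i j : Fin 2,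
        (X : Matrix (Fin 2) (Fin 2) A) i j ∈ F i j}) from Set.ext fun X => mem_idealFam]
    simp only [Set.mem_setOf_eq]
    constructor
    · intro h
      exact ⟨h 0 0, h 0 1, h 1 0, h 1 1⟩
    · rintro ⟨h00, h01, h10, h11⟩ i j
      fin_cases i <;> fin_cases j
      · exact h00
      · exact h01
      · exact h10
      · exact h11
  · intro X hX
    have hXm := mem_hatA_iff.mp X.2
    have hc : ∀ (k l : Fin 2) (b : A) (hb : k ≠ l → b ∈ M) (i j : Fin 2),
        ((X * el k l b hb * X : hatA A M) : Matrix (Fin 2) (Fin 2) A) i j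
        = (X : Matrix (Fin 2) (Fin 2) A) i k * b * (X : Matrix (Fin 2) (Fin 2) A) l j := by
      intro k l b hb i j
      push_cast
      rw [el_coe, mid_apply]
    have h00 : (X : Matrix (Fin 2) (Fin 2) A) 0 0 ∈ I := by
      have h := mem_idealFam.mp (hX (el 0 0 1 (fun h => absurd rfl h))) 0 0
      rw [hc, hF00] at h
      exact hIsp _ (by rw [pow_two]; simpa using h)
    have h11 : (X : Matrix (Fin 2) (Fin 2) A) 1 1 ∈ I' := by
      have h := mem_idealFam.mp (hX (el 1 1 1 (fun h => absurd rfl h))) 1 1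
      rw [hc, hF11] at h
      exact hI'sp _ (by rw [pow_two]; simpa using h)
    have h01 : (X : Matrix (Fin 2) (Fin 2) A) 0 1 ∈ M ⊓ I := by
      have h := mem_idealFam.mp
        (hX (el 1 0 ((X : Matrix (Fin 2) (Fin 2) A) 0 1) (fun _ => hXm.1))) 0 1
      rw [hc, hF01] at h
      exact ⟨hXm.1, cube_mem hIsp _ h.2⟩
    have h10 : (X : Matrix (Fin 2) (Fin 2) A) 1 0 ∈ M ⊓ I' := by
      have h := mem_idealFam.mp
        (hX (el 0 1 ((X : Matrix (Fin 2) (Fin 2) A) 1 0) (fun _ => hXm.2))) 1 0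
      rw [hc, hF10] at h
      exact ⟨hXm.2, cube_mem hI'sp _ h.2⟩
    rw [mem_idealFam]
    intro i j
    fin_cases i <;> fin_cases j
    · exact h00
    · exact h01
    · exact h10
    · exact h11


end StmtAux

/-- Description of the two-sided ideals and of the semiprime two-sided ideals of
`Â = [[A, M],[M, A]]`, for `A` a commutative domain and `M ≠ 0` an ideal of `A`. -/
theorem stmt_14 (A : Type*) [CommRing A] [IsDomain A] (M : Ideal A) (hM : M ≠ ⊥) :
    (∀ T : Set ↥(hatA A M),
      (∃ Ihat : TwoSidedIdeal (hatA A M), (Ihat : Set ↥(hatA A M)) = T) ↔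
      (∃ I : Fin 2 → Fin 2 → Ideal A,
        (∀ i j : Fin 2, i ≠ j → I i j ≤ M) ∧
        (∀ i j : Fin 2, ∀ m ∈ M, ∀ a ∈ I i j,
          m * a ∈ I (other i) j ∧ m * a ∈ I i (other j)) ∧
        T = {X : ↥(hatA A M) | ∀ i j : Fin 2, (X : Matrix (Fin 2) (Fin 2) A) i j ∈ I i j})) ∧
    (∀ T : Set ↥(hatA A M),
      (∃ Ihat : TwoSidedIdeal (hatA A M), (Ihat : Set ↥(hatA A M)) = T ∧ IsSemiprimeTSI Ihat) ↔
      (∃ I I' : Ideal A, IsSemiprimeIdeal I ∧ IsSemiprimeIdeal I' ∧ M ⊓ I = M ⊓ I' ∧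
        T = {X : ↥(hatA A M) |
          (X : Matrix (Fin 2) (Fin 2) A) 0 0 ∈ I ∧
          (X : Matrix (Fin 2) (Fin 2) A) 0 1 ∈ M ⊓ I ∧
          (X : Matrix (Fin 2) (Fin 2) A) 1 0 ∈ M ⊓ I' ∧
          (X : Matrix (Fin 2) (Fin 2) A) 1 1 ∈ I'})) := by
  constructor
  · exact fun T => StmtAux.part1 T
  · intro T
    constructor
    · rintro ⟨Ihat, rfl, hsp⟩
      exact StmtAux.part2_forward hsp
    · rintro ⟨I, I', h1, h2, h3, rfl⟩
      obtain ⟨Ihat, heq, hsp⟩ := StmtAux.part2_backward h1 h2 h3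
      exact ⟨Ihat, heq, hsp⟩
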